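/- Let φ : ℝⁿ → ℝ be a smooth mollification kernel (0 ≤ φ ≤ 1, support in [−1,1]ⁿ) with ∫ φ = 1, and set φ_t(x) = t^(−n) φ(x/t). Let r > 0, m ∈ ℕ, α ∈ (0,1], H ≥ 0, and let f : ℝⁿ → ℝ be m-times continuously differentiable such that for every k = 0, …, m the k-th iterated derivative satisfies the Hölder bound ‖D^k f(x) − D^k f(y)‖ ≤ H · ‖x−y‖^α for all x, y in the open sup-norm ball B(0, r). Then for every t ∈ (0, r/2), every k = 0, …, m, and every x with ‖x‖ < r/2, ‖D^k(φ_t ⋆ f)(x) − D^k f(x)‖ ≤ H · t^α. -/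

import Mathlib

set_option maxHeartbeats 1000000
set_option synthInstance.maxHeartbeats 1000000

open MeasureTheory

/-- The rescaled mollification kernel `φ_t(x) = t^(-n) φ(x/t)` on
`ℝⁿ = Fin n → ℝ` (equipped with the sup norm). -/
noncomputable def mollifierKernel (n : ℕ) (φ : (Fin n → ℝ) → ℝ) (t : ℝ) :
    (Fin n → ℝ) → ℝ :=
  fun x => t ^ (-(n : ℝ)) * φ (t⁻¹ • x)

section Aux

variable {n : ℕ} {E : Type*} [NormedAddCommGroup E] [NormedSpace ℝ E]

/-- Integrability of the convolution integrand for bounded continuous `g`. -/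
lemma conv_integrand_integrable {ψ : (Fin n → ℝ) → ℝ} (hψ : Integrable ψ)
    {g : (Fin n → ℝ) → E} (hg : Continuous g) {C : ℝ} (hgC : ∀ y, ‖g y‖ ≤ C)
    (x : Fin n → ℝ) : Integrable (fun h => ψ h • g (x - h)) := by
  refine (hψ.norm.mul_const C).mono'
    (hψ.aestronglyMeasurable.smul
      ((hg.comp (continuous_const.sub continuous_id)).aestronglyMeasurable)) ?_
  filter_upwards with h
  rw [norm_smul]
  exact mul_le_mul_of_nonneg_left (hgC _) (norm_nonneg _)

/-- Differentiation under the integral sign for the convolution with an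
integrable kernel, when `g` is `C¹` with bounded value and derivative. -/
lemma conv_hasFDerivAt [CompleteSpace E] {ψ : (Fin n → ℝ) → ℝ} (hψ : Integrable ψ)
    {g : (Fin n → ℝ) → E} (hg : ContDiff ℝ 1 g) {C₀ C₁ : ℝ}
    (hg0 : ∀ y, ‖g y‖ ≤ C₀) (hg1 : ∀ y, ‖fderiv ℝ g y‖ ≤ C₁) (x : Fin n → ℝ) :
    HasFDerivAt (fun z => ∫ h, ψ h • g (z - h))
      (∫ h, ψ h • fderiv ℝ g (x - h)) x := by
  have hgc : Continuous g := hg.continuous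
  have hg'c : Continuous (fderiv ℝ g) := hg.continuous_fderiv one_ne_zero
  apply hasFDerivAt_integral_of_dominated_of_fderiv_le
    (F := fun z h => ψ h • g (z - h)) (F' := fun z h => ψ h • fderiv ℝ g (z - h))
    (bound := fun h => ‖ψ h‖ * C₁) Filter.univ_mem
  · filter_upwards with z using
      hψ.aestronglyMeasurable.smul
        ((hgc.comp (continuous_const.sub continuous_id)).aestronglyMeasurable)
  · exact conv_integrand_integrable hψ hgc hg0 x
  · exact hψ.aestronglyMeasurable.smul
      ((hg'c.comp (continuous_const.sub continuous_id)).aestronglyMeasurable)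
  · filter_upwards with h z _
    exact (norm_smul_le _ _).trans (mul_le_mul_of_nonneg_left (hg1 _) (norm_nonneg _))
  · exact hψ.norm.mul_const C₁
  · filter_upwards with h z _
    have hd : HasFDerivAt g (fderiv ℝ g (z - h)) (z - h) :=
      (hg.differentiable one_ne_zero (z - h)).hasFDerivAt
    have : HasFDerivAt (fun z => g (z - h)) (fderiv ℝ g (z - h)) z := by
      exact hd.comp z ((hasFDerivAt_id z).sub_const h)
    exact this.const_smul (ψ h)

end Aux

/-- Derivatives commute with convolution: the `k`-th iterated derivative of
`ψ ⋆ f` is `ψ ⋆ D^k f`. -/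
lemma iteratedFDeriv_conv {n m : ℕ} {ψ f : (Fin n → ℝ) → ℝ}
    (hψ : Integrable ψ) (hf : ContDiff ℝ (m : ℕ∞) f)
    (hfBdd : ∀ k ≤ m, ∃ C : ℝ, ∀ x, ‖iteratedFDeriv ℝ k f x‖ ≤ C) :
    ∀ k ≤ m, ∀ x : Fin n → ℝ,
      iteratedFDeriv ℝ k (fun z => ∫ h, ψ h * f (z - h)) x =
        ∫ h, ψ h • iteratedFDeriv ℝ k f (x - h) := by
  intro k
  induction k with
  | zero =>
    intro _ x
    have key : ∀ g : (Fin n → ℝ) → ℝ,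
        (continuousMultilinearCurryFin0 ℝ (Fin n → ℝ) ℝ).symm (∫ h, g h) =
          ∫ h, (continuousMultilinearCurryFin0 ℝ (Fin n → ℝ) ℝ).symm (g h) := fun g => by
      simp only [← LinearIsometryEquiv.coe_toContinuousLinearEquiv]
      exact (ContinuousLinearEquiv.integral_comp_comm _ g).symm
    simp only [iteratedFDeriv_zero_eq_comp, Function.comp_apply]
    rw [key]
    simp only [← smul_eq_mul, _root_.map_smul]
  | succ k IH =>
    intro hk1 x
    have hk : k ≤ m := Nat.le_of_succ_le hk1
    set Fk := iteratedFDeriv ℝ k f with hFk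
    have hFkC1 : ContDiff ℝ 1 Fk := by
      apply hf.iteratedFDeriv_right
      norm_cast
      omega
    obtain ⟨C₀, hC₀⟩ := hfBdd k hk
    obtain ⟨C₁, hC₁⟩ := hfBdd (k + 1) hk1
    have hfd : fderiv ℝ Fk = fun y =>
        (continuousMultilinearCurryLeftEquiv ℝ (fun _ : Fin (k + 1) => (Fin n → ℝ)) ℝ)
          (iteratedFDeriv ℝ (k + 1) f y) := by
      rw [hFk, fderiv_iteratedFDeriv]; rfl
    have hC₁' : ∀ y, ‖fderiv ℝ Fk y‖ ≤ C₁ := by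
      intro y
      rw [hfd]
      exact (LinearIsometryEquiv.norm_map _ _).trans_le (hC₁ y)
    have hIH : iteratedFDeriv ℝ k (fun z => ∫ h, ψ h * f (z - h)) =
        fun z => ∫ h, ψ h • Fk (z - h) := funext (IH hk)
    have hfd'c : Continuous (fderiv ℝ Fk) := hFkC1.continuous_fderiv one_ne_zero
    have hint' :=
      conv_integrand_integrable (E := (Fin n → ℝ) →L[ℝ] (Fin n → ℝ) [×k]→L[ℝ] ℝ) hψ hfd'c hC₁' x
    have hFk1cont : Continuous (iteratedFDeriv ℝ (k + 1) f) :=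
      hf.continuous_iteratedFDeriv (by exact_mod_cast hk1)
    have hint2 : Integrable (fun h => ψ h • iteratedFDeriv ℝ (k + 1) f (x - h)) :=
      conv_integrand_integrable hψ hFk1cont hC₁ x
    have hD : fderiv ℝ (iteratedFDeriv ℝ k (fun z => ∫ h, ψ h * f (z - h))) x
        = ∫ h, ψ h • fderiv ℝ Fk (x - h) := by
      rw [hIH]
      exact (conv_hasFDerivAt hψ hFkC1 hC₀ hC₁' x).fderiv
    ext v
    rw [iteratedFDeriv_succ_apply_left, hD,
      ContinuousLinearMap.integral_apply hint',
      ContinuousMultilinearMap.integral_apply (hint'.apply_continuousLinearMap _),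
      ContinuousMultilinearMap.integral_apply hint2]
    congr 1

/-- Lemma 3.5 (Hölder approximation by mollification): if `f` is `C^m`,
bounded together with its derivatives up to order `m`, and the iterated
derivatives `D^k f`, `k = 0, …, m`, are `α`-Hölder with constant `H` on the
open sup-norm ball `B(0, r)`, and `φ` is a smooth mollification kernel with
`∫ φ = 1`, then `‖D^k(φ_t ⋆ f)(x) - D^k f(x)‖ ≤ H t^α` for `t ∈ (0, r/2)`,
`k = 0, …, m`, and `‖x‖ < r/2`, where `(φ_t ⋆ f)(x) = ∫ φ_t(h) f(x - h) dh`. -/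
theorem mollification_Holder_approximation_derivs (n : ℕ) (φ : (Fin n → ℝ) → ℝ)
    (hφsmooth : ContDiff ℝ (⊤ : ℕ∞) φ)
    (hφ0 : ∀ x, 0 ≤ φ x) (hφ1 : ∀ x, φ x ≤ 1)
    (hsupp : Function.support φ ⊆ Metric.closedBall 0 1)
    (hφint : ∫ x, φ x = 1)
    (r : ℝ) (m : ℕ) (α H : ℝ) (hr : 0 < r) (hα : α ∈ Set.Ioc (0 : ℝ) 1)
    (hH : 0 ≤ H)
    (f : (Fin n → ℝ) → ℝ) (hf : ContDiff ℝ (m : ℕ∞) f)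
    (hfBdd : ∀ k ≤ m, ∃ C : ℝ, ∀ x, ‖iteratedFDeriv ℝ k f x‖ ≤ C)
    (hfHolder : ∀ k ≤ m, ∀ x y : Fin n → ℝ, ‖x‖ < r → ‖y‖ < r →
      ‖iteratedFDeriv ℝ k f x - iteratedFDeriv ℝ k f y‖ ≤ H * ‖x - y‖ ^ α)
    (t : ℝ) (ht : t ∈ Set.Ioo (0 : ℝ) (r / 2))
    (k : ℕ) (hk : k ≤ m)
    (x : Fin n → ℝ) (hx : ‖x‖ < r / 2) :
    ‖iteratedFDeriv ℝ k (fun z => ∫ h, mollifierKernel n φ t h * f (z - h)) x -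
        iteratedFDeriv ℝ k f x‖ ≤ H * t ^ α := by
  obtain ⟨ht0, htr⟩ := ht
  set ψ := mollifierKernel n φ t with hψdef
  -- basic facts about ψ
  have hψ0 : ∀ y, 0 ≤ ψ y := fun y =>
    mul_nonneg (Real.rpow_nonneg ht0.le _) (hφ0 _)
  have hψcont : Continuous ψ := by
    exact continuous_const.mul (hφsmooth.continuous.comp (continuous_const_smul _))
  have hψsupp : Function.support ψ ⊆ Metric.closedBall 0 t := by
    intro y hy
    have hφy : φ (t⁻¹ • y) ≠ 0 := by
      intro h0
      apply hy
      simp [hψdef, mollifierKernel, h0]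
    have := hsupp (Function.mem_support.mpr hφy)
    rw [Metric.mem_closedBall, dist_zero_right] at this ⊢
    rw [norm_smul] at this
    rw [norm_inv, Real.norm_eq_abs, abs_of_pos ht0] at this
    calc ‖y‖ = t * (t⁻¹ * ‖y‖) := by field_simp
      _ ≤ t * 1 := by
          exact mul_le_mul_of_nonneg_left this ht0.le
      _ = t := mul_one t
  have hψcs : HasCompactSupport ψ :=
    HasCompactSupport.of_support_subset_isCompact (isCompact_closedBall 0 t) hψsupp
  have hψint : Integrable ψ := hψcont.integrable_of_hasCompactSupport hψcs
  have hψ1 : ∫ y, ψ y = 1 := by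
    have := MeasureTheory.Measure.integral_comp_inv_smul_of_nonneg
      (volume : Measure (Fin n → ℝ)) φ ht0.le
    simp only [Module.finrank_fintype_fun_eq_card, Fintype.card_fin, smul_eq_mul,
      hφint, mul_one] at this
    rw [hψdef]
    unfold mollifierKernel
    rw [MeasureTheory.integral_const_mul, this]
    rw [Real.rpow_neg ht0.le, Real.rpow_natCast]
    field_simp
  -- commute derivatives with convolution
  rw [iteratedFDeriv_conv hψint hf hfBdd k hk x]
  set Fk := iteratedFDeriv ℝ k f with hFkdef
  have hFkcont : Continuous Fk :=
    hf.continuous_iteratedFDeriv (by exact_mod_cast hk)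
  obtain ⟨C₀, hC₀⟩ := hfBdd k hk
  have hint1 : Integrable (fun h => ψ h • Fk (x - h)) :=
    conv_integrand_integrable hψint hFkcont hC₀ x
  have hint2 : Integrable (fun h => ψ h • Fk x) := hψint.smul_const _
  have hxx : Fk x = ∫ h, ψ h • Fk x := by
    rw [integral_smul_const, hψ1, one_smul]
  rw [hxx, ← integral_sub hint1 hint2]
  have hbound : ∀ h, ‖ψ h • Fk (x - h) - ψ h • Fk x‖ ≤ ψ h * (H * t ^ α) := by
    intro h
    by_cases hh : ψ h = 0
    · simp [hh, mul_nonneg hH (Real.rpow_nonneg ht0.le _)]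
    · have hht : ‖h‖ ≤ t := by
        have := hψsupp (Function.mem_support.mpr hh)
        rwa [Metric.mem_closedBall, dist_zero_right] at this
      have hxh : ‖x - h‖ < r := by
        calc ‖x - h‖ ≤ ‖x‖ + ‖h‖ := norm_sub_le _ _
          _ < r / 2 + r / 2 := by gcongr; exact lt_of_le_of_lt hht htr
          _ = r := by ring
      have hxr : ‖x‖ < r := lt_trans hx (by linarith)
      have hH1 : ‖Fk (x - h) - Fk x‖ ≤ H * ‖(x - h) - x‖ ^ α :=
        hfHolder k hk _ _ hxh hxr
      have hH2 : ‖(x - h) - x‖ ^ α ≤ t ^ α := by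
        have : ‖(x - h) - x‖ = ‖h‖ := by rw [sub_sub_cancel_left, norm_neg]
        rw [this]
        exact Real.rpow_le_rpow (norm_nonneg _) hht hα.1.le
      calc ‖ψ h • Fk (x - h) - ψ h • Fk x‖ = ψ h * ‖Fk (x - h) - Fk x‖ := by
            rw [← smul_sub, norm_smul, Real.norm_eq_abs, abs_of_nonneg (hψ0 h)]
        _ ≤ ψ h * (H * ‖(x - h) - x‖ ^ α) :=
            mul_le_mul_of_nonneg_left hH1 (hψ0 h)
        _ ≤ ψ h * (H * t ^ α) := by
            refine mul_le_mul_of_nonneg_left ?_ (hψ0 h)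
            exact mul_le_mul_of_nonneg_left hH2 hH
  calc ‖∫ h, (ψ h • Fk (x - h) - ψ h • Fk x)‖
      ≤ ∫ h, ψ h * (H * t ^ α) := by
        refine norm_integral_le_of_norm_le (hψint.mul_const _) ?_
        filter_upwards with h using hbound h
    _ = H * t ^ α := by rw [integral_mul_const, hψ1, one_mul]
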